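/- Under the stated operator setting, let 1 ≤ k ≤ r, let Φ be an n-dimensional subspace of H with n > k, let λ₁ ≥ ⋯ ≥ λ_n be the Ritz values of T on Φ with Ritz basis γ₁, …, γ_n, and assume μ_k > λ_{k+1}. Then d_F(span{η₁, …, η_k}, Φ)² ≤ d_F(span{γ₁, …, γ_k}, span{η₁, …, η_k})² ≤ (1 + ‖P_{Φ⊥} T P_Φ‖₂² / (μ_k − λ_{k+1})²) · d_F(span{η₁, …, η_k}, Φ)². -/

import Mathlib

/-!
Let `E = span{η_1, …, η_k}`, `Γ = span{γ_1, …, γ_k}` and `a_i = ‖P_{Φᗮ} η_i‖²`. Both projection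
distances are sums over the orthonormal vectors `η_i`: `d_F(E, Φ)² = ∑ a_i`, and, as `E` and `Γ`
have the same dimension,
`d_F(Γ, E)² = d_F(E, Γ)² = ∑ ‖P_{Γᗮ} η_i‖² = ∑ (a_i + ∑_{k<j≤n} ⟪γ_j, η_i⟫²)`,
which gives the lower bound. For the upper bound, self-adjointness of `T` turns the Ritz relation
`P_Φ T γ_j = λ_j γ_j` into `(μ_i - λ_j) ⟪γ_j, η_i⟫ = ⟪γ_j, R† P_{Φᗮ} η_i⟫` with `R = P_{Φᗮ} T P_Φ`;
since `μ_i - λ_j ≥ μ_k - λ_{k+1}` for `i ≤ k < j`, Bessel's inequality bounds the tail sum by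
`‖R‖² a_i / (μ_k - λ_{k+1})²`.
-/

open scoped RealInnerProductSpace ENNReal
open Submodule Filter

noncomputable section

variable {H : Type*} [NormedAddCommGroup H] [InnerProductSpace ℝ H] [CompleteSpace H]

/-- Orthogonal projection onto `U`, as an operator `H → H` (defined to be `0` in the
degenerate case where `U` admits no orthogonal projection). -/
noncomputable def proj (U : Submodule ℝ H) : H →L[ℝ] H := by
  classical
  exact if h : HasOrthogonalProjection U then
    (haveI := h; U.subtypeL ∘L orthogonalProjection U)
  else 0

/-- Squared Hilbert–Schmidt norm of an operator, computed in a fixed Hilbert basis of `H`. -/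
noncomputable def hsNormSq (A : H →L[ℝ] H) : ℝ≥0∞ :=
  ∑' i : (exists_hilbertBasis ℝ H).choose,
    (‖A ((exists_hilbertBasis ℝ H).choose_spec.choose i)‖₊ : ℝ≥0∞) ^ 2

/-- Hilbert–Schmidt (Frobenius) norm of an operator. -/
noncomputable def hsNorm (A : H →L[ℝ] H) : ℝ := Real.sqrt (hsNormSq A).toReal

/-- Projection distance `d_F(U, W) = ‖P_{Wᗮ} P_U‖_F`. -/
noncomputable def dF (U W : Submodule ℝ H) : ℝ := hsNorm ((proj Wᗮ) ∘L (proj U))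

/-- Gap distance `d₂(U, W) = ‖P_{Wᗮ} P_U‖₂`. -/
noncomputable def d2 (U W : Submodule ℝ H) : ℝ := ‖(proj Wᗮ) ∘L (proj U)‖

section
variable {E : Type*} [NormedAddCommGroup E] [InnerProductSpace ℝ E] {ι κ : Type*}

theorem proj_eq_starProjection (U : Submodule ℝ E) [U.HasOrthogonalProjection] :
    proj U = U.starProjection := by
  rw [proj, dif_pos ‹_›]; rfl

theorem Real.enorm_sq (a : ℝ) : ‖a‖ₑ ^ 2 = ENNReal.ofReal (a ^ 2) := by
  rw [Real.enorm_eq_ofReal_abs, ← ENNReal.ofReal_pow (abs_nonneg a), sq_abs]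

theorem HilbertBasis.tsum_enorm_inner_sq (b : HilbertBasis κ ℝ E) (x : E) :
    ∑' i, ‖⟪b i, x⟫‖ₑ ^ 2 = ‖x‖ₑ ^ 2 := by
  have h : HasSum (fun i => ⟪b i, x⟫ ^ 2) (‖x‖ ^ 2) := by
    rw [← real_inner_self_eq_norm_sq]
    simpa only [sq, real_inner_comm x] using b.hasSum_inner_mul_inner x x
  simp_rw [Real.enorm_sq, ← ofReal_norm, ← ENNReal.ofReal_pow (norm_nonneg x)]
  rw [← ENNReal.ofReal_tsum_of_nonneg (fun _ => sq_nonneg _) h.summable, h.tsum_eq]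

instance Submodule.finiteDimensional_span_image_finset (v : ι → E) (s : Finset ι) :
    FiniteDimensional ℝ (span ℝ (v '' s)) :=
  FiniteDimensional.span_of_finite ℝ (s.finite_toSet.image v)

theorem orthonormal_finset_of_inner_eq_ite [DecidableEq ι] {v : ι → E} {S : Finset ι}
    (h : ∀ i ∈ S, ∀ j ∈ S, ⟪v i, v j⟫ = if i = j then (1 : ℝ) else 0) {s : Finset ι}
    (hs : s ⊆ S) : Orthonormal ℝ (fun i : s => v i) := by
  rw [orthonormal_iff_ite]
  rintro ⟨i, hi⟩ ⟨j, hj⟩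
  simp [h i (hs hi) j (hs hj), Subtype.ext_iff]

namespace Orthonormal

variable {v : ι → E} {s : Finset ι}

theorem norm_starProjection_span_sq (hv : Orthonormal ℝ (fun i : s => v i)) (x : E) :
    ‖(span ℝ (v '' s)).starProjection x‖ ^ 2 = ∑ i ∈ s, ⟪v i, x⟫ ^ 2 := by
  classical
  have hU : span ℝ (Finset.univ.image (fun i : s => v i) : Set E) = span ℝ (v '' s) := by
    rw [Finset.coe_image, Finset.coe_univ, Set.image_univ, Set.image_eq_range]; rfl
  let b := (OrthonormalBasis.span hv Finset.univ).map (LinearIsometryEquiv.ofEq _ _ hU)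
  rw [starProjection_apply, ← coe_norm, ← b.sum_sq_inner_right]
  simp only [inner_orthogonalProjectionOnto_eq_of_mem_left, b, OrthonormalBasis.map_apply,
    LinearIsometryEquiv.coe_ofEq_apply, OrthonormalBasis.span_apply]
  exact (Finset.sum_coe_sort _ _).trans (Finset.sum_coe_sort s fun i => ⟪v i, x⟫ ^ 2)

theorem sum_inner_sq_le (hv : Orthonormal ℝ (fun i : s => v i)) (x : E) :
    ∑ i ∈ s, ⟪v i, x⟫ ^ 2 ≤ ‖x‖ ^ 2 := by
  rw [← hv.norm_starProjection_span_sq]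
  gcongr
  exact norm_starProjection_apply_le _ x

theorem norm_starProjection_orthogonal_span_sq (hv : Orthonormal ℝ (fun i : s => v i)) (x : E) :
    ‖(span ℝ (v '' s))ᗮ.starProjection x‖ ^ 2 = ‖x‖ ^ 2 - ∑ i ∈ s, ⟪v i, x⟫ ^ 2 := by
  have h := norm_sq_eq_add_norm_sq_projection x (span ℝ (v '' s))
  rw [← hv.norm_starProjection_span_sq x, starProjection_apply, starProjection_apply, ← coe_norm,
    ← coe_norm]
  linarith

theorem norm_starProjection_orthogonal_span_subset_sq [DecidableEq ι]
    (hv : Orthonormal ℝ (fun i : s => v i)) {t : Finset ι} (hts : t ⊆ s) (x : E) :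
    ‖(span ℝ (v '' t))ᗮ.starProjection x‖ ^ 2 =
      ‖(span ℝ (v '' s))ᗮ.starProjection x‖ ^ 2 + ∑ i ∈ s \ t, ⟪v i, x⟫ ^ 2 := by
  have hvt : Orthonormal ℝ (fun i : t => v i) :=
    hv.comp _ (Set.inclusion_injective (Finset.coe_subset.2 hts))
  rw [hv.norm_starProjection_orthogonal_span_sq, hvt.norm_starProjection_orthogonal_span_sq,
    ← Finset.sum_sdiff hts]
  ring

end Orthonormal

end

section
variable {K : Type*} [NormedAddCommGroup K] [InnerProductSpace ℝ K] [CompleteSpace K]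
  {ι κ κ' : Type*}

theorem tsum_enorm_apply_sq_eq_adjoint (b : HilbertBasis κ ℝ H) (c : HilbertBasis κ' ℝ K)
    (A : H →L[ℝ] K) :
    ∑' i, ‖A (b i)‖ₑ ^ 2 = ∑' j, ‖ContinuousLinearMap.adjoint A (c j)‖ₑ ^ 2 := calc
  _ = ∑' i, ∑' j, ‖⟪c j, A (b i)⟫‖ₑ ^ 2 := by simp_rw [c.tsum_enorm_inner_sq]
  _ = ∑' j, ∑' i, ‖⟪b i, ContinuousLinearMap.adjoint A (c j)⟫‖ₑ ^ 2 := by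
    rw [ENNReal.tsum_comm]
    simp_rw [ContinuousLinearMap.adjoint_inner_right, real_inner_comm]
  _ = _ := by simp_rw [b.tsum_enorm_inner_sq]

theorem hsNormSq_eq_tsum_adjoint (c : HilbertBasis κ ℝ H) (A : H →L[ℝ] H) :
    hsNormSq A = ∑' j, ‖ContinuousLinearMap.adjoint A (c j)‖ₑ ^ 2 := by
  simp_rw [hsNormSq, ← enorm_eq_nnnorm]
  exact tsum_enorm_apply_sq_eq_adjoint _ c A

namespace Orthonormal

variable {v : ι → H} {s : Finset ι}

theorem hsNormSq_comp_starProjection_span (hv : Orthonormal ℝ (fun i : s => v i))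
    (A : H →L[ℝ] H) :
    hsNormSq (A ∘L (span ℝ (v '' s)).starProjection) = ∑ i ∈ s, ‖A (v i)‖ₑ ^ 2 := by
  obtain ⟨_, c, -⟩ := exists_hilbertBasis ℝ H
  have hP (y : H) : ‖(span ℝ (v '' s)).starProjection y‖ₑ ^ 2 = ∑ i ∈ s, ‖⟪v i, y⟫‖ₑ ^ 2 := by
    rw [← ofReal_norm, ← ENNReal.ofReal_pow (norm_nonneg _), hv.norm_starProjection_span_sq,
      ENNReal.ofReal_sum_of_nonneg fun _ _ => sq_nonneg _]
    simp_rw [Real.enorm_sq]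
  rw [hsNormSq_eq_tsum_adjoint c, ContinuousLinearMap.adjoint_comp,
    (isSelfAdjoint_starProjection _).adjoint_eq]
  simp_rw [ContinuousLinearMap.comp_apply, hP]
  rw [Summable.tsum_finsetSum fun _ _ => ENNReal.summable]
  refine Finset.sum_congr rfl fun i _ => (tsum_congr fun j => ?_).trans (c.tsum_enorm_inner_sq _)
  rw [ContinuousLinearMap.adjoint_inner_right, real_inner_comm]

theorem dF_span_sq (hv : Orthonormal ℝ (fun i : s => v i)) (W : Submodule ℝ H)
    [W.HasOrthogonalProjection] :
    dF (span ℝ (v '' s)) W ^ 2 = ∑ i ∈ s, ‖Wᗮ.starProjection (v i)‖ ^ 2 := by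
  rw [dF, hsNorm, Real.sq_sqrt ENNReal.toReal_nonneg, proj_eq_starProjection,
    proj_eq_starProjection, hv.hsNormSq_comp_starProjection_span,
    ENNReal.toReal_sum fun _ _ => ENNReal.pow_ne_top enorm_ne_top]
  simp only [ENNReal.toReal_pow, toReal_enorm]

theorem dF_span_comm {w : ι → H} (hv : Orthonormal ℝ (fun i : s => v i))
    (hw : Orthonormal ℝ (fun i : s => w i)) :
    dF (span ℝ (v '' s)) (span ℝ (w '' s)) = dF (span ℝ (w '' s)) (span ℝ (v '' s)) := by
  have hsq : dF (span ℝ (v '' s)) (span ℝ (w '' s)) ^ 2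
      = dF (span ℝ (w '' s)) (span ℝ (v '' s)) ^ 2 := by
    rw [hv.dF_span_sq, hw.dF_span_sq,
      Finset.sum_congr rfl fun i _ => hw.norm_starProjection_orthogonal_span_sq (v i),
      Finset.sum_congr rfl fun i _ => hv.norm_starProjection_orthogonal_span_sq (w i),
      Finset.sum_sub_distrib, Finset.sum_sub_distrib, Finset.sum_comm]
    simp only [real_inner_comm]
    congr 1
    exact Finset.sum_congr rfl fun i hi => by rw [hv.1 ⟨i, hi⟩, hw.1 ⟨i, hi⟩]
  exact (pow_left_inj₀ (Real.sqrt_nonneg _) (Real.sqrt_nonneg _) two_ne_zero).1 hsq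

end Orthonormal

variable {T : H →L[ℝ] H} (Φ : Submodule ℝ H) [Φ.HasOrthogonalProjection]

theorem sub_mul_inner_eq_inner_adjoint (hT : (T : H →ₗ[ℝ] H).IsSymmetric) {γ η : H}
    {lam μ : ℝ} (hγΦ : γ ∈ Φ) (hγ : Φ.starProjection (T γ) = lam • γ) (hη : T η = μ • η) :
    (μ - lam) * ⟪γ, η⟫ = ⟪γ, ContinuousLinearMap.adjoint
      (Φᗮ.starProjection ∘L T ∘L Φ.starProjection) (Φᗮ.starProjection η)⟫ := by
  have hTγ : ⟪T γ, η⟫ = ⟪γ, T η⟫ := hT γ η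
  rw [ContinuousLinearMap.adjoint_inner_right, ContinuousLinearMap.comp_apply,
    ContinuousLinearMap.comp_apply, starProjection_eq_self_iff.2 hγΦ,
    inner_starProjection_left_eq_right,
    starProjection_eq_self_iff.2 (starProjection_apply_mem _ η),
    ← inner_starProjection_left_eq_right, starProjection_orthogonal_val, inner_sub_left, hγ,
    hTγ, hη, real_inner_smul_left, real_inner_smul_right]
  ring

theorem sum_inner_sq_le_of_ritz (hT : (T : H →ₗ[ℝ] H).IsSymmetric) {γ : ι → H} {s : Finset ι}
    (hγ : Orthonormal ℝ (fun i : s => γ i)) (hγΦ : ∀ i ∈ s, γ i ∈ Φ) {lam : ι → ℝ}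
    (hritz : ∀ i ∈ s, Φ.starProjection (T (γ i)) = lam i • γ i) {η : H} {μ : ℝ}
    (hη : T η = μ • η) {δ : ℝ} (hδ : 0 < δ) (hgap : ∀ i ∈ s, δ ≤ μ - lam i) :
    ∑ i ∈ s, ⟪γ i, η⟫ ^ 2 ≤
      ‖Φᗮ.starProjection ∘L T ∘L Φ.starProjection‖ ^ 2 / δ ^ 2 * ‖Φᗮ.starProjection η‖ ^ 2 := by
  set R := Φᗮ.starProjection ∘L T ∘L Φ.starProjection
  set z := ContinuousLinearMap.adjoint R (Φᗮ.starProjection η)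
  rw [div_mul_eq_mul_div, le_div_iff₀ (by positivity), mul_comm]
  calc δ ^ 2 * ∑ i ∈ s, ⟪γ i, η⟫ ^ 2
      ≤ ∑ i ∈ s, ((μ - lam i) * ⟪γ i, η⟫) ^ 2 := by
        rw [Finset.mul_sum]
        refine Finset.sum_le_sum fun i hi => ?_
        rw [mul_pow]
        gcongr
        exact hgap i hi
    _ = ∑ i ∈ s, ⟪γ i, z⟫ ^ 2 := Finset.sum_congr rfl fun i hi => by
        rw [sub_mul_inner_eq_inner_adjoint Φ hT (hγΦ i hi) (hritz i hi) hη]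
    _ ≤ ‖z‖ ^ 2 := hγ.sum_inner_sq_le z
    _ ≤ (‖R‖ * ‖Φᗮ.starProjection η‖) ^ 2 := by
        gcongr
        rw [← ContinuousLinearMap.adjoint.norm_map R]
        exact ContinuousLinearMap.le_opNorm _ _
    _ = ‖R‖ ^ 2 * ‖Φᗮ.starProjection η‖ ^ 2 := mul_pow _ _ _

end

theorem stmt4_general {H : Type*} [NormedAddCommGroup H] [InnerProductSpace ℝ H] [CompleteSpace H]
    (T : H →L[ℝ] H)
    (hTsa : ∀ x y : H, ⟪T x, y⟫ = ⟪x, T y⟫)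
    (r : ℕ) (η : ℕ → H) (μ : ℕ → ℝ)
    (hη : ∀ i ∈ Set.Icc 1 r, ∀ j ∈ Set.Icc 1 r, ⟪η i, η j⟫ = if i = j then (1 : ℝ) else 0)
    (hTeig : ∀ i ∈ Set.Icc 1 r, T (η i) = μ i • η i)
    (hμmono : ∀ i ∈ Set.Icc 1 (r + 1), ∀ j ∈ Set.Icc 1 (r + 1), i ≤ j → μ j ≤ μ i)
    (n : ℕ) (Φ : Submodule ℝ H)
    (lam : ℕ → ℝ) (γ : ℕ → H)
    (hγ : ∀ i ∈ Set.Icc 1 n, ∀ j ∈ Set.Icc 1 n, ⟪γ i, γ j⟫ = if i = j then (1 : ℝ) else 0)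
    (hγspan : span ℝ (γ '' Set.Icc 1 n) = Φ)
    (hγeig : ∀ i ∈ Set.Icc 1 n, proj Φ (T (γ i)) = lam i • γ i)
    (hlam : ∀ i ∈ Set.Icc 1 n, ∀ j ∈ Set.Icc 1 n, i ≤ j → lam j ≤ lam i)
    (k : ℕ) (hkr : k ≤ r) (hkn : k < n)
    (hgap : lam (k + 1) < μ k) :
    dF (span ℝ (η '' Set.Icc 1 k)) Φ ^ 2 ≤
        dF (span ℝ (γ '' Set.Icc 1 k)) (span ℝ (η '' Set.Icc 1 k)) ^ 2 ∧
      dF (span ℝ (γ '' Set.Icc 1 k)) (span ℝ (η '' Set.Icc 1 k)) ^ 2 ≤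
        (1 + ‖proj Φᗮ ∘L (T ∘L proj Φ)‖ ^ 2 / (μ k - lam (k + 1)) ^ 2) *
          dF (span ℝ (η '' Set.Icc 1 k)) Φ ^ 2 := by
  rw [← Finset.coe_Icc] at hγspan
  subst hγspan
  simp only [← Finset.coe_Icc, proj_eq_starProjection] at hη hTeig hμmono hγ hγeig hlam ⊢
  have hkn' : Finset.Icc 1 k ⊆ Finset.Icc 1 n := Finset.Icc_subset_Icc_right hkn.le
  have hηk := orthonormal_finset_of_inner_eq_ite hη (Finset.Icc_subset_Icc_right hkr)
  have hγk := orthonormal_finset_of_inner_eq_ite hγ hkn'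
  have hγn := orthonormal_finset_of_inner_eq_ite hγ (subset_refl _)
  have hγtail := orthonormal_finset_of_inner_eq_ite hγ (Finset.sdiff_subset (t := Finset.Icc 1 k))
  have hsep : ∀ i ∈ Finset.Icc 1 k, ∀ j ∈ Finset.Icc 1 n \ Finset.Icc 1 k,
      μ k - lam (k + 1) ≤ μ i - lam j := by
    intro i hi j hj
    simp only [Finset.mem_sdiff, Finset.mem_Icc] at hi hj
    have := hμmono i (Finset.mem_Icc.2 (by omega)) k (Finset.mem_Icc.2 (by omega)) hi.2
    have := hlam (k + 1) (Finset.mem_Icc.2 (by omega)) j (Finset.mem_Icc.2 (by omega)) (by omega)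
    linarith
  have htail : ∀ i ∈ Finset.Icc 1 k, ∑ j ∈ Finset.Icc 1 n \ Finset.Icc 1 k, ⟪γ j, η i⟫ ^ 2 ≤ _ :=
    fun i hi => sum_inner_sq_le_of_ritz _ hTsa hγtail
      (fun j hj => subset_span (Set.mem_image_of_mem γ (Finset.mem_sdiff.1 hj).1))
      (fun j hj => hγeig j (Finset.mem_sdiff.1 hj).1)
      (hTeig i (Finset.Icc_subset_Icc_right hkr hi)) (sub_pos.2 hgap) (hsep i hi)
  rw [hγk.dF_span_comm hηk, hηk.dF_span_sq, hηk.dF_span_sq, Finset.sum_congr rfl fun i _ =>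
    hγn.norm_starProjection_orthogonal_span_subset_sq hkn' (η i)]
  constructor
  · exact Finset.sum_le_sum fun i _ =>
      le_add_of_nonneg_right (Finset.sum_nonneg fun _ _ => sq_nonneg _)
  · rw [Finset.mul_sum]
    exact Finset.sum_le_sum fun i hi => by linarith [htail i hi]

/-- Rayleigh–Ritz eigenspace bound:
`d_F(E₁ₖ, Φ)² ≤ d_F(Γ₁ₖ, E₁ₖ)² ≤ (1 + ‖P_{Φᗮ} T P_Φ‖₂²/(μ_k − λ_{k+1})²) d_F(E₁ₖ, Φ)²`,
where `E₁ₖ = span{η₁..η_k}` and `Γ₁ₖ = span{γ₁..γ_k}`. -/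
theorem stmt4 {H : Type*} [NormedAddCommGroup H] [InnerProductSpace ℝ H] [CompleteSpace H]
    (T : H →L[ℝ] H)
    (hTsa : ∀ x y : H, ⟪T x, y⟫ = ⟪x, T y⟫)
    (hTpos : ∀ u : H, 0 ≤ ⟪u, T u⟫)
    (r : ℕ) (hr : 1 ≤ r) (η : ℕ → H) (μ : ℕ → ℝ)
    (hη : ∀ i ∈ Set.Icc 1 r, ∀ j ∈ Set.Icc 1 r, ⟪η i, η j⟫ = if i = j then (1 : ℝ) else 0)
    (hTeig : ∀ i ∈ Set.Icc 1 r, T (η i) = μ i • η i)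
    (hμmono : ∀ i ∈ Set.Icc 1 (r + 1), ∀ j ∈ Set.Icc 1 (r + 1), i ≤ j → μ j ≤ μ i)
    (hμr : 0 < μ r) (hμr1 : 0 ≤ μ (r + 1))
    (hTinv : ∀ w ∈ (span ℝ (η '' Set.Icc 1 r))ᗮ, T w ∈ (span ℝ (η '' Set.Icc 1 r))ᗮ)
    (hTres : ∀ w ∈ (span ℝ (η '' Set.Icc 1 r))ᗮ, ⟪w, T w⟫ ≤ μ (r + 1) * ‖w‖ ^ 2)
    (n : ℕ) (Φ : Submodule ℝ H) (hΦfd : FiniteDimensional ℝ Φ) (hΦn : Module.finrank ℝ Φ = n)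
    (lam : ℕ → ℝ) (γ : ℕ → H)
    (hγ : ∀ i ∈ Set.Icc 1 n, ∀ j ∈ Set.Icc 1 n, ⟪γ i, γ j⟫ = if i = j then (1 : ℝ) else 0)
    (hγspan : span ℝ (γ '' Set.Icc 1 n) = Φ)
    (hγeig : ∀ i ∈ Set.Icc 1 n, proj Φ (T (γ i)) = lam i • γ i)
    (hlam : ∀ i ∈ Set.Icc 1 n, ∀ j ∈ Set.Icc 1 n, i ≤ j → lam j ≤ lam i)
    (k : ℕ) (hk1 : 1 ≤ k) (hkr : k ≤ r) (hkn : k < n)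
    (hgap : lam (k + 1) < μ k) :
    dF (span ℝ (η '' Set.Icc 1 k)) Φ ^ 2 ≤
        dF (span ℝ (γ '' Set.Icc 1 k)) (span ℝ (η '' Set.Icc 1 k)) ^ 2 ∧
      dF (span ℝ (γ '' Set.Icc 1 k)) (span ℝ (η '' Set.Icc 1 k)) ^ 2 ≤
        (1 + ‖proj Φᗮ ∘L (T ∘L proj Φ)‖ ^ 2 / (μ k - lam (k + 1)) ^ 2) *
          dF (span ℝ (η '' Set.Icc 1 k)) Φ ^ 2 :=
  stmt4_general T hTsa r η μ hη hTeig hμmono n Φ lam γ hγ hγspan hγeig hlam k hkr hkn hgap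

end
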